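/- arXiv:2412.20181 — 5 statements merged into one kernel-verified Lean document; each statement's English description precedes it below -/
import Mathlib

section
/- Let v₁, …, vₙ be the vertices of an open equilateral polygonal curve in ℝ³ with edge length e, and suppose the curve satisfies the simple-tube property for radius r > e/2, i.e., for all i < j, B_r(vᵢ) ∩ B_r(vⱼ) ⊆ B_r(v_k) for every k with i < k < j. Then the volume of ⋃ᵢ B_r(vᵢ) equals π(n−1)(r²e − e³/12) + (4π/3)r³. -/
open Real MeasureTheory Metric

lemma gamma52 : Real.Gamma (3/2 + 1) = 3/4 * Real.sqrt π := by
  rw [Real.Gamma_add_one (by norm_num)]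
  have : (3:ℝ)/2 = 1/2 + 1 := by norm_num
  rw [this, Real.Gamma_add_one (by norm_num), Real.Gamma_one_half_eq]
  ring

lemma vol_ball3 (x : EuclideanSpace ℝ (Fin 3)) {r : ℝ} (hr : 0 ≤ r) :
    volume (closedBall x r) = ENNReal.ofReal (4 * π / 3 * r ^ 3) := by
  rw [EuclideanSpace.volume_closedBall]
  simp only [Fintype.card_fin]
  rw [← ENNReal.ofReal_pow hr, ← ENNReal.ofReal_mul (by positivity)]
  congr 1
  rw [show ((3:ℕ):ℝ)/2 + 1 = 3/2 + 1 by norm_num, gamma52]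
  have hπ : 0 < Real.sqrt π := Real.sqrt_pos.2 pi_pos
  have : Real.sqrt π ^ 3 = π * Real.sqrt π := by
    rw [pow_succ, Real.sq_sqrt pi_pos.le]
  rw [this]
  field_simp

lemma vol_ball2 (x : EuclideanSpace ℝ (Fin 2)) {r : ℝ} (hr : 0 ≤ r) :
    volume (closedBall x r) = ENNReal.ofReal (π * r ^ 2) := by
  rw [EuclideanSpace.volume_closedBall]
  simp only [Fintype.card_fin]
  rw [← ENNReal.ofReal_pow hr, ← ENNReal.ofReal_mul (by positivity)]
  rw [show ((2:ℕ):ℝ)/2 + 1 = 2 by norm_num, Real.Gamma_two, Real.sq_sqrt pi_pos.le]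
  rw [mul_comm]; norm_num

lemma vol_disk (m : ℝ) :
    volume {g : Fin 2 → ℝ | ∑ j, g j ^ 2 ≤ m} = ENNReal.ofReal (π * m) := by
  rcases lt_or_ge m 0 with hm | hm
  · have : {g : Fin 2 → ℝ | ∑ j, g j ^ 2 ≤ m} = ∅ := by
      ext g; simp only [Set.mem_setOf_eq, Set.mem_empty_iff_false, iff_false, not_le]
      exact hm.trans_le (Finset.sum_nonneg fun j _ => sq_nonneg _)
    rw [this, measure_empty, Eq.comm, ENNReal.ofReal_eq_zero]
    nlinarith [pi_pos]
  · have hpre : (MeasurableEquiv.toLp 2 (Fin 2 → ℝ)).symm ⁻¹' {g : Fin 2 → ℝ | ∑ j, g j ^ 2 ≤ m}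
        = closedBall (0 : EuclideanSpace ℝ (Fin 2)) (Real.sqrt m) := by
      ext p
      simp only [Set.mem_preimage, Set.mem_setOf_eq, mem_closedBall, EuclideanSpace.dist_eq]
      have : ∀ j, dist (p j) ((0 : EuclideanSpace ℝ (Fin 2)) j) ^ 2 = p j ^ 2 := by
        intro j; rw [Real.dist_eq]; simp [sq_abs]
      simp_rw [this]
      rw [show (MeasurableEquiv.toLp 2 (Fin 2 → ℝ)).symm p = (p : Fin 2 → ℝ) from rfl]
      exact (Real.sqrt_le_sqrt_iff hm).symm
    rw [← (EuclideanSpace.volume_preserving_symm_measurableEquiv_toLp (Fin 2)).measure_preimage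
        (s := {g : Fin 2 → ℝ | ∑ j, g j ^ 2 ≤ m})
        ((isClosed_le (continuous_finset_sum _ fun j _ => (continuous_apply j).pow 2 :
            Continuous fun g : Fin 2 → ℝ => ∑ j, g j ^ 2)
          continuous_const).measurableSet).nullMeasurableSet,
      hpre, vol_ball2 _ (Real.sqrt_nonneg m), Real.sq_sqrt hm]

lemma integral_lens {r e : ℝ} (he : 0 < e) (her : e < 2 * r) :
    ∫⁻ x : ℝ, ENNReal.ofReal (π * (r ^ 2 - max (x ^ 2) ((x - e) ^ 2)))
      = ENNReal.ofReal (4 * π / 3 * r ^ 3 - π * r ^ 2 * e + π * e ^ 3 / 12) := by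
  have hr : 0 < r := by linarith
  set g : ℝ → ℝ := fun x => π * max (r ^ 2 - max (x ^ 2) ((x - e) ^ 2)) 0 with hg
  have hgnn : ∀ x, 0 ≤ g x := fun x => mul_nonneg pi_pos.le (le_max_right _ _)
  have hcong : ∀ x, ENNReal.ofReal (π * (r ^ 2 - max (x ^ 2) ((x - e) ^ 2)))
      = ENNReal.ofReal (g x) := by
    intro x
    rcases le_total (r ^ 2 - max (x ^ 2) ((x - e) ^ 2)) 0 with h | h
    · rw [ENNReal.ofReal_eq_zero.2 (mul_nonpos_of_nonneg_of_nonpos pi_pos.le h)]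
      rw [hg]; simp only [max_eq_right h, mul_zero, ENNReal.ofReal_zero]
    · rw [hg]; simp only [max_eq_left h]
  have hgcont : Continuous g := by
    apply continuous_const.mul
    exact ((continuous_const.sub (((continuous_id.pow 2).max
      (((continuous_id.sub continuous_const)).pow 2)))).max continuous_const)
  have hsupp : ∀ x, x ∉ Set.Icc (e - r) r → g x = 0 := by
    intro x hx
    rw [Set.mem_Icc, not_and_or] at hx
    have hle : r ^ 2 ≤ max (x ^ 2) ((x - e) ^ 2) := by
      rcases hx with hx | hx
      · push_neg at hx
        calc r ^ 2 ≤ (x - e) ^ 2 := by nlinarith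
        _ ≤ _ := le_max_right _ _
      · push_neg at hx
        calc r ^ 2 ≤ x ^ 2 := by nlinarith
        _ ≤ _ := le_max_left _ _
    rw [hg]; simp only [max_eq_right (by linarith : r ^ 2 - max (x ^ 2) ((x - e) ^ 2) ≤ 0),
      mul_zero]
  have hint : Integrable g := by
    apply hgcont.integrable_of_hasCompactSupport
    exact HasCompactSupport.intro isCompact_Icc hsupp
  rw [lintegral_congr hcong, ← ofReal_integral_eq_lintegral_ofReal hint
    (Filter.Eventually.of_forall hgnn)]
  congr 1
  have h1 : e - r ≤ e / 2 := by linarith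
  have h2 : e / 2 ≤ r := by linarith
  rw [← setIntegral_eq_integral_of_forall_compl_eq_zero hsupp,
    integral_Icc_eq_integral_Ioc, ← intervalIntegral.integral_of_le (by linarith : e - r ≤ r),
    ← intervalIntegral.integral_add_adjacent_intervals (a := e - r) (b := e / 2) (c := r)
      (hgcont.intervalIntegrable _ _) (hgcont.intervalIntegrable _ _)]
  have I : ∀ a b c : ℝ, ∫ x in a..b, π * (r ^ 2 - (x - c) ^ 2)
      = π * (r ^ 2 * (b - a) - ((b - c) ^ 3 - (a - c) ^ 3) / 3) := by
    intro a b c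
    rw [intervalIntegral.integral_const_mul]
    congr 1
    rw [intervalIntegral.integral_sub (intervalIntegrable_const)
      ((Continuous.intervalIntegrable (by continuity) _ _ :
        IntervalIntegrable (fun x : ℝ => (x - c) ^ 2) volume a b)),
      intervalIntegral.integral_const,
      intervalIntegral.integral_comp_sub_right (fun y => y ^ 2) c, integral_pow, smul_eq_mul]
    push_cast
    ring
  have e1 : ∫ x in (e - r)..(e / 2), g x
      = ∫ x in (e - r)..(e / 2), π * (r ^ 2 - (x - e) ^ 2) := by
    apply intervalIntegral.integral_congr
    intro x hx
    rw [Set.uIcc_of_le h1] at hx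
    obtain ⟨ha, hb⟩ := hx
    have hmax : max (x ^ 2) ((x - e) ^ 2) = (x - e) ^ 2 := max_eq_right (by nlinarith)
    have hpos : 0 ≤ r ^ 2 - (x - e) ^ 2 := by nlinarith
    rw [hg]; simp only [hmax, max_eq_left hpos]
  have e2 : ∫ x in (e / 2)..r, g x = ∫ x in (e / 2)..r, π * (r ^ 2 - (x - 0) ^ 2) := by
    apply intervalIntegral.integral_congr
    intro x hx
    rw [Set.uIcc_of_le h2] at hx
    obtain ⟨ha, hb⟩ := hx
    have hmax : max (x ^ 2) ((x - e) ^ 2) = x ^ 2 := max_eq_left (by nlinarith)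
    have hpos : 0 ≤ r ^ 2 - x ^ 2 := by nlinarith
    rw [hg]; simp only [hmax, max_eq_left hpos, sub_zero]
  rw [e1, e2, I, I]
  ring

lemma lens_std {r e : ℝ} (he : 0 < e) (her : e < 2 * r) :
    volume (closedBall (0 : EuclideanSpace ℝ (Fin 3)) r ∩
        closedBall (e • EuclideanSpace.single (0 : Fin 3) (1:ℝ)) r) =
      ENNReal.ofReal (4 * π / 3 * r ^ 3 - π * r ^ 2 * e + π * e ^ 3 / 12) := by
  have hr : 0 < r := by linarith
  set c : EuclideanSpace ℝ (Fin 3) := e • EuclideanSpace.single (0 : Fin 3) (1:ℝ) with hc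
  have hcapp : ∀ i : Fin 3, c i = if i = 0 then e else 0 := by
    intro i
    simp [hc, EuclideanSpace.single_apply, mul_ite]
  set A : Set (Fin 3 → ℝ) :=
    {f | ∑ i, f i ^ 2 ≤ r ^ 2 ∧ ∑ i, (f i - (if i = (0:Fin 3) then e else 0)) ^ 2 ≤ r ^ 2}
    with hA
  have hmeasA : MeasurableSet A := by
    apply MeasurableSet.inter
    · exact isClosed_le (continuous_finset_sum _ fun j _ => (continuous_apply j).pow 2)
        continuous_const |>.measurableSet
    · exact isClosed_le (continuous_finset_sum _ fun j _ =>
        (((continuous_apply j).sub continuous_const).pow 2)) continuous_const |>.measurableSet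
  have step1 : volume (closedBall (0 : EuclideanSpace ℝ (Fin 3)) r ∩ closedBall c r)
      = volume A := by
    rw [← (EuclideanSpace.volume_preserving_symm_measurableEquiv_toLp (Fin 3)).measure_preimage
        hmeasA.nullMeasurableSet]
    congr 1
    ext p
    simp only [Set.mem_preimage, Set.mem_inter_iff, mem_closedBall, EuclideanSpace.dist_eq,
      hA, Set.mem_setOf_eq]
    have hd0 : ∀ i : Fin 3, dist (p i) ((0 : EuclideanSpace ℝ (Fin 3)) i) ^ 2 = p i ^ 2 := by
      intro i; rw [Real.dist_eq]; simp [sq_abs]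
    have hdc : ∀ i : Fin 3, dist (p i) (c i) ^ 2 = (p i - (if i = (0:Fin 3) then e else 0)) ^ 2 := by
      intro i; rw [Real.dist_eq, sq_abs, hcapp]
    simp_rw [hd0, hdc]
    rw [show (MeasurableEquiv.toLp 2 (Fin 3 → ℝ)).symm p = (p : Fin 3 → ℝ) from rfl]
    have key : ∀ s : ℝ, 0 ≤ s → (Real.sqrt s ≤ r ↔ s ≤ r ^ 2) := by
      intro s hs
      constructor
      · intro h; nlinarith [Real.sq_sqrt hs, Real.sqrt_nonneg s]
      · intro h; rw [← Real.sqrt_sq hr.le]; exact Real.sqrt_le_sqrt h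
    rw [key _ (by positivity), key _ (by positivity)]
  set B : Set (ℝ × (Fin 2 → ℝ)) :=
    {q | q.1 ^ 2 + ∑ j, q.2 j ^ 2 ≤ r ^ 2 ∧ (q.1 - e) ^ 2 + ∑ j, q.2 j ^ 2 ≤ r ^ 2} with hB
  have hmeasB : MeasurableSet B := by
    apply MeasurableSet.inter
    · exact isClosed_le ((continuous_fst.pow 2).add (continuous_finset_sum _ fun j _ =>
        ((continuous_apply j).comp continuous_snd).pow 2)) continuous_const |>.measurableSet
    · exact isClosed_le (((continuous_fst.sub continuous_const).pow 2).add
        (continuous_finset_sum _ fun j _ =>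
        ((continuous_apply j).comp continuous_snd).pow 2)) continuous_const |>.measurableSet
  have step2 : volume A = volume B := by
    rw [← (volume_preserving_piFinSuccAbove (fun _ : Fin 3 => ℝ) 0).measure_preimage
        hmeasB.nullMeasurableSet]
    congr 1
    ext f
    have happ : (MeasurableEquiv.piFinSuccAbove (fun _ : Fin 3 => ℝ) 0) f
        = (f 0, fun j => f ((0 : Fin 3).succAbove j)) := rfl
    simp only [Set.mem_preimage, happ, hA, hB, Set.mem_setOf_eq]
    rw [Fin.sum_univ_succAbove (fun i => f i ^ 2) 0,
      Fin.sum_univ_succAbove (fun i => (f i - if i = 0 then e else 0) ^ 2) 0]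
    simp [Fin.succAbove_zero, Fin.succ_ne_zero, sub_zero]
  have step3 : volume B = ∫⁻ x : ℝ, ENNReal.ofReal (π * (r ^ 2 - max (x ^ 2) ((x - e) ^ 2))) := by
    rw [Measure.volume_eq_prod, Measure.prod_apply hmeasB]
    congr 1
    ext x
    have hslice : Prod.mk x ⁻¹' B = {g : Fin 2 → ℝ | ∑ j, g j ^ 2 ≤
        r ^ 2 - max (x ^ 2) ((x - e) ^ 2)} := by
      ext g
      simp only [Set.mem_preimage, hB, Set.mem_setOf_eq]
      constructor
      · rintro ⟨h1, h2⟩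
        rcases le_total (x ^ 2) ((x - e) ^ 2) with h | h
        · rw [max_eq_right h]; linarith
        · rw [max_eq_left h]; linarith
      · intro h
        constructor
        · have := le_max_left (x ^ 2) ((x - e) ^ 2); linarith
        · have := le_max_right (x ^ 2) ((x - e) ^ 2); linarith
    rw [hslice, vol_disk]
  rw [step1, step2, step3]
  exact integral_lens he her

lemma lens_vol {r e : ℝ} (he : 0 < e) (her : e < 2 * r) (a b : EuclideanSpace ℝ (Fin 3))
    (hab : dist a b = e) :
    volume (closedBall a r ∩ closedBall b r) =
      ENNReal.ofReal (4 * π / 3 * r ^ 3 - π * r ^ 2 * e + π * e ^ 3 / 12) := by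
  have hene : e ≠ 0 := ne_of_gt he
  set w : EuclideanSpace ℝ (Fin 3) := b - a with hw
  have hwn : ‖w‖ = e := by rw [hw, ← dist_eq_norm, dist_comm]; exact hab
  -- translate so that a becomes 0
  have htrans : volume (closedBall a r ∩ closedBall b r)
      = volume (closedBall (0 : EuclideanSpace ℝ (Fin 3)) r ∩ closedBall w r) := by
    have : (fun x => a + x) ⁻¹' (closedBall a r ∩ closedBall b r)
        = closedBall (0 : EuclideanSpace ℝ (Fin 3)) r ∩ closedBall w r := by
      ext x
      have e1 : a + x - a = x - 0 := by abel
      have e2 : a + x - b = x - (b - a) := by abel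
      simp only [Set.mem_preimage, Set.mem_inter_iff, mem_closedBall, dist_eq_norm, hw, e1, e2]
    rw [← this, measure_preimage_add]
  rw [htrans]
  -- rotate w to the first axis
  set u : EuclideanSpace ℝ (Fin 3) := e⁻¹ • w with hu
  have hun : ‖u‖ = 1 := by
    rw [hu, norm_smul, hwn, norm_inv, Real.norm_eq_abs, abs_of_pos he, inv_mul_cancel₀ hene]
  have horth : Orthonormal ℝ (Set.restrict {(0 : Fin 3)} fun _ => u) := by
    constructor
    · intro i; exact hun
    · intro i j hij
      exact absurd (Subsingleton.elim i j) hij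
  obtain ⟨bas, hbas⟩ := horth.exists_orthonormalBasis_extension_of_card_eq
    (by simp [finrank_euclideanSpace] : Module.finrank ℝ (EuclideanSpace ℝ (Fin 3))
      = Fintype.card (Fin 3))
  have hbas0 : bas 0 = u := hbas 0 rfl
  have hrw : bas.repr w = e • EuclideanSpace.single (0 : Fin 3) (1:ℝ) := by
    have : w = e • u := by rw [hu, smul_smul, mul_inv_cancel₀ hene, one_smul]
    rw [this, LinearIsometryEquiv.map_smul, ← hbas0, bas.repr_self]
  have hpre : (bas.repr : EuclideanSpace ℝ (Fin 3) → EuclideanSpace ℝ (Fin 3)) ⁻¹'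
      (closedBall (0 : EuclideanSpace ℝ (Fin 3)) r ∩
        closedBall (e • EuclideanSpace.single (0 : Fin 3) (1:ℝ)) r)
      = closedBall (0 : EuclideanSpace ℝ (Fin 3)) r ∩ closedBall w r := by
    ext p
    have d1 : dist (bas.repr p) 0 = dist p 0 := by
      rw [dist_zero_right, dist_zero_right, LinearIsometryEquiv.norm_map]
    have d2 : dist (bas.repr p) (bas.repr w) = dist p w := bas.repr.dist_map p w
    simp only [Set.mem_preimage, Set.mem_inter_iff, mem_closedBall, ← hrw, d2, d1]
  have hmeas : MeasurableSet (closedBall (0 : EuclideanSpace ℝ (Fin 3)) r ∩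
      closedBall (e • EuclideanSpace.single (0 : Fin 3) (1:ℝ)) r) :=
    (isClosed_closedBall.inter isClosed_closedBall).measurableSet
  rw [← lens_std he her, ← bas.measurePreserving_repr.measure_preimage
    hmeas.nullMeasurableSet, hpre]

theorem volume_simple_tube (n : ℕ) (hn : 1 ≤ n) (v : ℕ → EuclideanSpace ℝ (Fin 3))
    (r e : ℝ) (he : 0 < e) (her : e < 2 * r)
    (hedge : ∀ i, i + 1 < n → dist (v i) (v (i + 1)) = e)
    (htube : ∀ i k j, i < k → k < j → j < n →
      closedBall (v i) r ∩ closedBall (v j) r ⊆ closedBall (v k) r) :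
    volume (⋃ i ∈ Finset.range n, closedBall (v i) r) =
      ENNReal.ofReal (π * ((n : ℝ) - 1) * (r ^ 2 * e - e ^ 3 / 12) + (4 * π / 3) * r ^ 3) := by
  have hr : 0 < r := by linarith
  revert hedge htube
  induction n, hn using Nat.le_induction with
  | base =>
    intro hedge htube
    simp only [Finset.range_one, Finset.mem_singleton, Set.iUnion_iUnion_eq_left]
    rw [vol_ball3 _ hr.le]
    norm_num
  | succ m hm ih =>
    intro hedge htube
    have ihm := ih (fun i h => hedge i (by omega))
      (fun i k j h1 h2 h3 => htube i k j h1 h2 (by omega))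
    have hsplit : (⋃ i ∈ Finset.range (m + 1), closedBall (v i) r)
        = closedBall (v m) r ∪ ⋃ i ∈ Finset.range m, closedBall (v i) r := by
      rw [Finset.range_add_one, Finset.set_biUnion_insert]
    have hinter : closedBall (v m) r ∩ (⋃ i ∈ Finset.range m, closedBall (v i) r)
        = closedBall (v (m - 1)) r ∩ closedBall (v m) r := by
      apply Set.Subset.antisymm
      · rintro x ⟨hxm, hxU⟩
        simp only [Set.mem_iUnion, Finset.mem_range] at hxU
        obtain ⟨i, hi, hxi⟩ := hxU
        rcases eq_or_lt_of_le (Nat.le_sub_one_of_lt hi) with heq | hlt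
        · exact ⟨heq ▸ hxi, hxm⟩
        · refine ⟨htube i (m - 1) m hlt (by omega) (by omega) ⟨hxi, hxm⟩, hxm⟩
      · rintro x ⟨hx1, hx2⟩
        refine ⟨hx2, ?_⟩
        simp only [Set.mem_iUnion, Finset.mem_range]
        exact ⟨m - 1, by omega, hx1⟩
    have hd : dist (v (m - 1)) (v m) = e := by
      have := hedge (m - 1) (by omega)
      rwa [show m - 1 + 1 = m by omega] at this
    have hlensv := lens_vol he her (v (m - 1)) (v m) hd
    have hkey := measure_union_add_inter' (μ := volume)
      (measurableSet_closedBall : MeasurableSet (closedBall (v m) r))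
      (⋃ i ∈ Finset.range m, closedBall (v i) r)
    rw [hinter, hlensv, vol_ball3 _ hr.le, ihm] at hkey
    set L : ℝ := 4 * π / 3 * r ^ 3 - π * r ^ 2 * e + π * e ^ 3 / 12 with hL
    set X : ℝ := π * ((m : ℝ) - 1) * (r ^ 2 * e - e ^ 3 / 12) + 4 * π / 3 * r ^ 3 with hX
    have hinner : 0 ≤ 4 * r ^ 3 / 3 - r ^ 2 * e + e ^ 3 / 12 := by
      nlinarith [mul_nonneg (sq_nonneg (2 * r - e)) (show (0:ℝ) ≤ 4 * r + e by linarith)]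
    have hLnn : 0 ≤ L := by
      have : L = π * (4 * r ^ 3 / 3 - r ^ 2 * e + e ^ 3 / 12) := by rw [hL]; ring
      rw [this]
      exact mul_nonneg pi_pos.le hinner
    have hXnn : 0 ≤ X := by
      rw [hX]
      have h1 : 0 ≤ (m : ℝ) - 1 := by
        have : (1 : ℝ) ≤ (m : ℝ) := by exact_mod_cast hm
        linarith
      have h2 : 0 ≤ r ^ 2 * e - e ^ 3 / 12 := by
        nlinarith [mul_nonneg (mul_nonneg (show (0:ℝ) ≤ 2 * r - e by linarith)
          (show (0:ℝ) ≤ 2 * r + e by linarith)) he.le, pow_pos he 3]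
      positivity
    have hsum : volume (⋃ i ∈ Finset.range (m + 1), closedBall (v i) r) + ENNReal.ofReal L
        = ENNReal.ofReal (4 * π / 3 * r ^ 3 + X) := by
      rw [hsplit, ENNReal.ofReal_add (by positivity) hXnn]
      exact hkey
    have := ENNReal.eq_sub_of_add_eq ENNReal.ofReal_ne_top hsum
    rw [this, ← ENNReal.ofReal_sub _ hLnn]
    congr 1
    rw [hX, hL]
    push_cast
    ring
end

section
/- Under the simple-tube property for radius r > e/2, the volume of the union ⋃_{i=1}^{n} B_r(vᵢ) of balls along an open equilateral polygonal curve depends only on n, e, and r, and not on the specific shape (vertex positions) of the curve. -/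
open Real MeasureTheory Metric

private lemma vol_ball_congr (x y : EuclideanSpace ℝ (Fin 3)) (r : ℝ) :
    volume (closedBall x r) = volume (closedBall y r) := by
  rw [Measure.addHaar_closedBall_center volume x, Measure.addHaar_closedBall_center volume y]

private lemma vol_inter_congr (a b c d : EuclideanSpace ℝ (Fin 3)) (r : ℝ)
    (h : dist a b = dist c d) :
    volume (closedBall a r ∩ closedBall b r) = volume (closedBall c r ∩ closedBall d r) := by
  have hnorm : ‖(b - a) - (d - c)‖ = ‖(b - a) - (d - c)‖ := rfl
  have hn : ‖b - a‖ = ‖d - c‖ := by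
    rw [← dist_eq_norm, ← dist_eq_norm, dist_comm b a, dist_comm d c]; exact h
  set R : EuclideanSpace ℝ (Fin 3) ≃ₗᵢ[ℝ] EuclideanSpace ℝ (Fin 3) :=
    Submodule.reflection (ℝ ∙ ((b - a) - (d - c)))ᗮ with hRdef
  have hR : R (b - a) = d - c := Submodule.reflection_sub hn
  set g : EuclideanSpace ℝ (Fin 3) → EuclideanSpace ℝ (Fin 3) :=
    fun x => a + R.symm (x - c) with hg
  have hmp : MeasurePreserving g volume volume := by
    exact (measurePreserving_add_left volume a).comp
      (R.symm.measurePreserving.comp (measurePreserving_sub_right volume c))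
  have hpre : g ⁻¹' (closedBall a r ∩ closedBall b r) = closedBall c r ∩ closedBall d r := by
    ext x
    simp only [Set.mem_preimage, Set.mem_inter_iff, mem_closedBall, hg]
    constructor
    · rintro ⟨h1, h2⟩
      constructor
      · have : dist (a + R.symm (x - c)) a = ‖x - c‖ := by
          rw [dist_eq_norm, add_sub_cancel_left, R.symm.norm_map]
        rw [dist_eq_norm]
        rw [this] at h1; exact h1
      · have hb : b = a + (b - a) := by abel
        have : dist (a + R.symm (x - c)) b = ‖x - d‖ := by
          conv_lhs => rw [hb]
          rw [dist_eq_norm]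
          have : a + R.symm (x - c) - (a + (b - a)) = R.symm (x - c) - (b - a) := by abel
          rw [this, ← R.symm_apply_apply (b - a), hR, ← map_sub, R.symm.norm_map]
          congr 1; abel
        rw [dist_eq_norm]
        rw [this] at h2; exact h2
    · rintro ⟨h1, h2⟩
      constructor
      · have : dist (a + R.symm (x - c)) a = ‖x - c‖ := by
          rw [dist_eq_norm, add_sub_cancel_left, R.symm.norm_map]
        rw [this, ← dist_eq_norm]; exact h1
      · have hb : b = a + (b - a) := by abel
        have : dist (a + R.symm (x - c)) b = ‖x - d‖ := by
          conv_lhs => rw [hb]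
          rw [dist_eq_norm]
          have : a + R.symm (x - c) - (a + (b - a)) = R.symm (x - c) - (b - a) := by abel
          rw [this, ← R.symm_apply_apply (b - a), hR, ← map_sub, R.symm.norm_map]
          congr 1; abel
        rw [this, ← dist_eq_norm]; exact h2
  calc volume (closedBall a r ∩ closedBall b r)
      = volume (g ⁻¹' (closedBall a r ∩ closedBall b r)) :=
        (hmp.measure_preimage
          ((measurableSet_closedBall.inter measurableSet_closedBall).nullMeasurableSet)).symm
    _ = volume (closedBall c r ∩ closedBall d r) := by rw [hpre]

theorem volume_simple_tube_shape_independent (n : ℕ)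
    (v w : ℕ → EuclideanSpace ℝ (Fin 3)) (r e : ℝ) (he : 0 < e) (her : e < 2 * r)
    (hedgev : ∀ i, i + 1 < n → dist (v i) (v (i + 1)) = e)
    (htubev : ∀ i k j, i < k → k < j → j < n →
      closedBall (v i) r ∩ closedBall (v j) r ⊆ closedBall (v k) r)
    (hedgew : ∀ i, i + 1 < n → dist (w i) (w (i + 1)) = e)
    (htubew : ∀ i k j, i < k → k < j → j < n →
      closedBall (w i) r ∩ closedBall (w j) r ⊆ closedBall (w k) r) :
    volume (⋃ i ∈ Finset.range n, closedBall (v i) r) =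
      volume (⋃ i ∈ Finset.range n, closedBall (w i) r) := by
  induction n with
  | zero => simp
  | succ m ih =>
    have hedgev' : ∀ i, i + 1 < m → dist (v i) (v (i + 1)) = e :=
      fun i hi => hedgev i (by omega)
    have htubev' : ∀ i k j, i < k → k < j → j < m →
        closedBall (v i) r ∩ closedBall (v j) r ⊆ closedBall (v k) r :=
      fun i k j h1 h2 h3 => htubev i k j h1 h2 (by omega)
    have hedgew' : ∀ i, i + 1 < m → dist (w i) (w (i + 1)) = e :=
      fun i hi => hedgew i (by omega)
    have htubew' : ∀ i k j, i < k → k < j → j < m →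
        closedBall (w i) r ∩ closedBall (w j) r ⊆ closedBall (w k) r :=
      fun i k j h1 h2 h3 => htubew i k j h1 h2 (by omega)
    have IH := ih hedgev' htubev' hedgew' htubew'
    rcases Nat.eq_zero_or_pos m with hm | hm
    · subst hm
      simp only [zero_add, Finset.range_one, Finset.mem_singleton, Set.iUnion_iUnion_eq_left]
      exact vol_ball_congr _ _ r
    -- m ≥ 1
    obtain ⟨k, rfl⟩ : ∃ k, m = k + 1 := ⟨m - 1, by omega⟩
    have hsplit : ∀ u : ℕ → EuclideanSpace ℝ (Fin 3),
        (⋃ i ∈ Finset.range (k + 2), closedBall (u i) r) =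
          (⋃ i ∈ Finset.range (k + 1), closedBall (u i) r) ∪ closedBall (u (k + 1)) r := by
      intro u
      rw [Finset.range_add_one]
      simp [Set.union_comm]
    have hinter : ∀ u : ℕ → EuclideanSpace ℝ (Fin 3),
        (∀ i k' j, i < k' → k' < j → j < k + 2 →
          closedBall (u i) r ∩ closedBall (u j) r ⊆ closedBall (u k') r) →
        (⋃ i ∈ Finset.range (k + 1), closedBall (u i) r) ∩ closedBall (u (k + 1)) r =
          closedBall (u k) r ∩ closedBall (u (k + 1)) r := by
      intro u htube
      apply Set.Subset.antisymm
      · rintro x ⟨hx1, hx2⟩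
        simp only [Set.mem_iUnion, Finset.mem_range] at hx1
        obtain ⟨i, hi, hxi⟩ := hx1
        refine ⟨?_, hx2⟩
        rcases Nat.lt_or_ge i k with hik | hik
        · exact htube i k (k + 1) hik (by omega) (by omega) ⟨hxi, hx2⟩
        · have : i = k := by omega
          subst this; exact hxi
      · rintro x ⟨hx1, hx2⟩
        refine ⟨?_, hx2⟩
        simp only [Set.mem_iUnion, Finset.mem_range]
        exact ⟨k, by omega, hx1⟩
    have hvu := measure_union_add_inter (μ := volume)
      (⋃ i ∈ Finset.range (k + 1), closedBall (v i) r) (measurableSet_closedBall (x := v (k+1)) (ε := r))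
    have hwu := measure_union_add_inter (μ := volume)
      (⋃ i ∈ Finset.range (k + 1), closedBall (w i) r) (measurableSet_closedBall (x := w (k+1)) (ε := r))
    rw [hinter v htubev] at hvu
    rw [hinter w htubew] at hwu
    rw [hsplit v, hsplit w]
    have hIvw : volume (closedBall (v k) r ∩ closedBall (v (k + 1)) r) =
        volume (closedBall (w k) r ∩ closedBall (w (k + 1)) r) := by
      apply vol_inter_congr
      rw [hedgev k (by omega), hedgew k (by omega)]
    have hBvw : volume (closedBall (v (k + 1)) r) = volume (closedBall (w (k + 1)) r) :=
      vol_ball_congr _ _ r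
    have hfin : volume (closedBall (v k) r ∩ closedBall (v (k + 1)) r) ≠ ⊤ :=
      ne_top_of_le_ne_top (measure_closedBall_lt_top).ne
        (measure_mono Set.inter_subset_left)
    refine (ENNReal.add_left_inj hfin).mp ?_
    rw [hvu, hIvw, hwu, IH, hBvw]
end

section
/- For an open equilateral polygonal curve satisfying the simple-tube property for radius r > e/2, the union ⋃ᵢ B_r(vᵢ) is contractible (has the homotopy type of a point), hence Euler characteristic 1. -/
open Real MeasureTheory Metric
open scoped RealInnerProductSpace

noncomputable section SimpleTubeAux

variable {F : Type*} [NormedAddCommGroup F] [InnerProductSpace ℝ F] [CompleteSpace F]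

/-- Metric projection onto a nonempty closed convex set. -/
noncomputable def cproj {K : Set F} (hne : K.Nonempty) (hcl : IsClosed K)
    (hco : Convex ℝ K) (u : F) : F :=
  (exists_norm_eq_iInf_of_complete_convex hne (hcl.isComplete) hco u).choose

theorem cproj_mem {K : Set F} (hne : K.Nonempty) (hcl : IsClosed K)
    (hco : Convex ℝ K) (u : F) : cproj hne hcl hco u ∈ K :=
  (exists_norm_eq_iInf_of_complete_convex hne (hcl.isComplete) hco u).choose_spec.1

theorem cproj_norm {K : Set F} (hne : K.Nonempty) (hcl : IsClosed K)
    (hco : Convex ℝ K) (u : F) :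
    ‖u - cproj hne hcl hco u‖ = ⨅ w : K, ‖u - w‖ :=
  (exists_norm_eq_iInf_of_complete_convex hne (hcl.isComplete) hco u).choose_spec.2

theorem cproj_inner_le {K : Set F} (hne : K.Nonempty) (hcl : IsClosed K)
    (hco : Convex ℝ K) (u : F) :
    ∀ w ∈ K, ⟪u - cproj hne hcl hco u, w - cproj hne hcl hco u⟫ ≤ 0 :=
  (norm_eq_iInf_iff_real_inner_le_zero hco (cproj_mem hne hcl hco u)).1
    (cproj_norm hne hcl hco u)

theorem cproj_eq_self {K : Set F} (hne : K.Nonempty) (hcl : IsClosed K)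
    (hco : Convex ℝ K) {u : F} (hu : u ∈ K) : cproj hne hcl hco u = u := by
  have h1 : ‖u - cproj hne hcl hco u‖ = ⨅ w : K, ‖u - w‖ := cproj_norm hne hcl hco u
  have h2 : (⨅ w : K, ‖u - w‖) ≤ 0 := by
    have := ciInf_le (f := fun w : K => ‖u - (w : F)‖)
      ⟨0, Set.forall_mem_range.2 fun _ => norm_nonneg _⟩ ⟨u, hu⟩
    simpa using this
  have h3 : ‖u - cproj hne hcl hco u‖ = 0 :=
    le_antisymm (h1 ▸ h2) (norm_nonneg _)
  exact (sub_eq_zero.1 (norm_eq_zero.1 h3)).symm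

theorem cproj_dist_le {K : Set F} (hne : K.Nonempty) (hcl : IsClosed K)
    (hco : Convex ℝ K) (u w : F) :
    dist (cproj hne hcl hco u) (cproj hne hcl hco w) ≤ dist u w := by
  set Pu := cproj hne hcl hco u
  set Pw := cproj hne hcl hco w
  have h1 : ⟪u - Pu, Pw - Pu⟫ ≤ 0 := cproj_inner_le hne hcl hco u _ (cproj_mem hne hcl hco w)
  have h2 : ⟪w - Pw, Pu - Pw⟫ ≤ 0 := cproj_inner_le hne hcl hco w _ (cproj_mem hne hcl hco u)
  have key : ‖Pu - Pw‖ ^ 2 ≤ ⟪u - w, Pu - Pw⟫ := by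
    have h1' : ⟪u - Pu, Pu - Pw⟫ ≥ 0 := by
      have : Pw - Pu = -(Pu - Pw) := by abel
      rw [this, inner_neg_right] at h1; linarith
    have hsum : ⟪(u - Pu) - (w - Pw), Pu - Pw⟫ ≥ 0 := by
      rw [inner_sub_left]; linarith
    have hexp : u - w = ((u - Pu) - (w - Pw)) + (Pu - Pw) := by abel
    rw [hexp, inner_add_left, real_inner_self_eq_norm_sq]
    linarith
  have cs : ⟪u - w, Pu - Pw⟫ ≤ ‖u - w‖ * ‖Pu - Pw‖ := real_inner_le_norm _ _
  rw [dist_eq_norm, dist_eq_norm]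
  rcases eq_or_lt_of_le (norm_nonneg (Pu - Pw)) with h0 | h0
  · rw [← h0]; exact norm_nonneg _
  · have : ‖Pu - Pw‖ * ‖Pu - Pw‖ ≤ ‖u - w‖ * ‖Pu - Pw‖ := by
      rw [← sq]; exact le_trans key cs
    exact le_of_mul_le_mul_right this h0

end SimpleTubeAux

theorem simple_tube_contractible (n : ℕ) (hn : 1 ≤ n) (v : ℕ → EuclideanSpace ℝ (Fin 3))
    (r e : ℝ) (he : 0 < e) (her : e < 2 * r)
    (hedge : ∀ i, i + 1 < n → dist (v i) (v (i + 1)) = e)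
    (htube : ∀ i k j, i < k → k < j → j < n →
      closedBall (v i) r ∩ closedBall (v j) r ⊆ closedBall (v k) r) :
    ContractibleSpace (⋃ i ∈ Finset.range n, closedBall (v i) r : Set (EuclideanSpace ℝ (Fin 3))) := by
  classical
  have hr : 0 < r := by linarith
  -- the partial unions
  have key : ∀ k, k + 1 ≤ n →
      (ContinuousMap.id
        ↥(⋃ i ∈ Finset.range (k + 1), closedBall (v i) r : Set (EuclideanSpace ℝ (Fin 3)))).Nullhomotopic := by
    intro k
    induction k with
    | zero =>
      intro _
      have h1 : (⋃ i ∈ Finset.range 1, closedBall (v i) r : Set (EuclideanSpace ℝ (Fin 3)))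
          = closedBall (v 0) r := by simp
      rw [h1]
      haveI : ContractibleSpace ↥(closedBall (v 0) r) :=
        (convex_closedBall (v 0) r).contractibleSpace ⟨v 0, mem_closedBall_self hr.le⟩
      exact id_nullhomotopic _
    | succ k IH =>
      intro hk2
      have hk1 : k + 1 ≤ n := by omega
      have hk1' : k + 1 < n := by omega
      set Pm : Set (EuclideanSpace ℝ (Fin 3)) :=
        ⋃ i ∈ Finset.range (k + 1), closedBall (v i) r with hPm
      set U : Set (EuclideanSpace ℝ (Fin 3)) :=
        ⋃ i ∈ Finset.range (k + 2), closedBall (v i) r with hUdef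
      set C : Set (EuclideanSpace ℝ (Fin 3)) := closedBall (v (k + 1)) r with hC
      set L : Set (EuclideanSpace ℝ (Fin 3)) := closedBall (v k) r ∩ C with hL
      have hPmcl : IsClosed Pm := by
        apply Set.Finite.isClosed_biUnion (Finset.finite_toSet _)
        intro i _; exact isClosed_closedBall
      have hPmU : Pm ⊆ U := by
        intro x hx
        rw [hPm, Set.mem_iUnion₂] at hx
        obtain ⟨i, hi, hxi⟩ := hx
        rw [Finset.mem_range] at hi
        rw [hUdef, Set.mem_iUnion₂]
        exact ⟨i, Finset.mem_range.mpr (by omega), hxi⟩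
      have hCU : C ⊆ U := by
        intro x hx
        rw [hUdef, Set.mem_iUnion₂]
        exact ⟨k + 1, Finset.mem_range.mpr (by omega), hx⟩
      have hCkPm : closedBall (v k) r ⊆ Pm := by
        intro x hx
        rw [hPm, Set.mem_iUnion₂]
        exact ⟨k, Finset.mem_range.mpr (by omega), hx⟩
      have hUeq : U = Pm ∪ C := by
        rw [hUdef, hPm, hC, Finset.range_add_one, Finset.set_biUnion_insert]
        exact Set.union_comm _ _
      have hLcl : IsClosed L := isClosed_closedBall.inter isClosed_closedBall
      have hLco : Convex ℝ L := (convex_closedBall _ _).inter (convex_closedBall _ _)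
      have hLne : L.Nonempty := by
        refine ⟨midpoint ℝ (v k) (v (k + 1)), ?_, ?_⟩
        · rw [mem_closedBall, dist_comm, dist_left_midpoint, hedge k hk1']
          rw [Real.norm_ofNat]
          linarith
        · rw [hC, mem_closedBall, dist_comm, dist_right_midpoint, hedge k hk1']
          rw [Real.norm_ofNat]
          linarith
      -- key inclusion from the tube property
      have hkey : C ∩ Pm ⊆ L := by
        rintro x ⟨hxC, hxP⟩
        rw [hPm, Set.mem_iUnion₂] at hxP
        obtain ⟨i, hi, hxi⟩ := hxP
        simp only [Finset.mem_range] at hi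
        rcases Nat.lt_or_ge i k with hik | hik
        · exact ⟨htube i k (k + 1) hik (Nat.lt_succ_self k) hk1' ⟨hxi, hxC⟩, hxC⟩
        · have : i = k := by omega
          subst this
          exact ⟨hxi, hxC⟩
      -- the projection map
      set proj : EuclideanSpace ℝ (Fin 3) → EuclideanSpace ℝ (Fin 3) :=
        cproj hLne hLcl hLco with hproj
      have hprojcont : Continuous proj := by
        refine LipschitzWith.continuous (K := 1) (LipschitzWith.of_dist_le_mul ?_)
        intro x y
        rw [NNReal.coe_one, one_mul]
        exact cproj_dist_le hLne hLcl hLco x y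
      have hprojmem : ∀ u, proj u ∈ L := fun u => cproj_mem hLne hLcl hLco u
      have hprojself : ∀ u ∈ L, proj u = u := fun u hu => cproj_eq_self hLne hLcl hLco hu
      -- the retraction on the subtype
      set s : Set ↥U := {x : ↥U | (x : EuclideanSpace ℝ (Fin 3)) ∈ C} with hs
      have hscl : IsClosed s := isClosed_closedBall.preimage continuous_subtype_val
      set R' : ↥U → EuclideanSpace ℝ (Fin 3) :=
        s.piecewise (fun x => proj (x : EuclideanSpace ℝ (Fin 3)))
          (fun x => (x : EuclideanSpace ℝ (Fin 3))) with hR'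
      have hfr : ∀ a ∈ frontier s,
          proj (a : EuclideanSpace ℝ (Fin 3)) = (a : EuclideanSpace ℝ (Fin 3)) := by
        intro a ha
        have h1 : (a : EuclideanSpace ℝ (Fin 3)) ∈ C := by
          have : a ∈ closure s := frontier_subset_closure ha
          rwa [hscl.closure_eq] at this
        have h2 : (a : EuclideanSpace ℝ (Fin 3)) ∈ Pm := by
          have hsc : sᶜ ⊆ Subtype.val ⁻¹' Pm := by
            intro x hx
            have hxU : (x : EuclideanSpace ℝ (Fin 3)) ∈ Pm ∪ C := by
              rw [← hUeq]; exact x.2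
            rcases hxU with h | h
            · exact h
            · exact absurd h hx
          have hclosed : IsClosed (Subtype.val ⁻¹' Pm : Set ↥U) :=
            hPmcl.preimage continuous_subtype_val
          have : a ∈ closure sᶜ := by
            rw [frontier_eq_closure_inter_closure] at ha
            exact ha.2
          exact (closure_minimal hsc hclosed) this
        exact hprojself _ (hkey ⟨h1, h2⟩)
      have hR'cont : Continuous R' :=
        Continuous.piecewise hfr (hprojcont.comp continuous_subtype_val)
          continuous_subtype_val
      have hR'memP : ∀ x : ↥U, R' x ∈ Pm := by
        intro x
        by_cases hx : x ∈ s
        · rw [hR', Set.piecewise_eq_of_mem _ _ _ hx]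
          exact hCkPm (hprojmem _).1
        · rw [hR', Set.piecewise_eq_of_notMem _ _ _ hx]
          have hxU : (x : EuclideanSpace ℝ (Fin 3)) ∈ Pm ∪ C := by
            rw [← hUeq]; exact x.2
          rcases hxU with h | h
          · exact h
          · exact absurd h hx
      have hR'memU : ∀ x : ↥U, R' x ∈ U := fun x => hPmU (hR'memP x)
      -- deformation: points move along segments inside U
      have hseg : ∀ (t : ℝ), 0 ≤ t → t ≤ 1 → ∀ x : ↥U,
          (1 - t) • (x : EuclideanSpace ℝ (Fin 3)) + t • R' x ∈ U := by
        intro t ht0 ht1 x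
        by_cases hx : x ∈ s
        · have h1 : (x : EuclideanSpace ℝ (Fin 3)) ∈ C := hx
          have h2 : R' x ∈ C := by
            rw [hR', Set.piecewise_eq_of_mem _ _ _ hx]
            exact (hprojmem _).2
          exact hCU ((convex_closedBall _ _) h1 h2 (by linarith) ht0 (by ring))
        · have : R' x = (x : EuclideanSpace ℝ (Fin 3)) := by
            rw [hR', Set.piecewise_eq_of_notMem _ _ _ hx]
          rw [this, ← add_smul]
          simp only [sub_add_cancel, one_smul]
          exact x.2
      -- bundled maps
      set Rb : C(↥U, ↥U) := ⟨fun x => ⟨R' x, hR'memU x⟩, hR'cont.subtype_mk _⟩ with hRb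
      set Rres : C(↥U, ↥Pm) := ⟨fun x => ⟨R' x, hR'memP x⟩, hR'cont.subtype_mk _⟩ with hRres
      set incl : C(↥Pm, ↥U) := ⟨fun y => ⟨(y : EuclideanSpace ℝ (Fin 3)), hPmU y.2⟩,
        continuous_subtype_val.subtype_mk _⟩ with hincl
      -- homotopy from the identity to Rb
      have hstep : (ContinuousMap.id ↥U).Homotopic Rb := by
        refine ⟨⟨⟨fun p => ⟨(1 - (p.1 : ℝ)) • (p.2 : EuclideanSpace ℝ (Fin 3))
            + (p.1 : ℝ) • R' p.2, hseg _ p.1.2.1 p.1.2.2 p.2⟩, ?_⟩, ?_, ?_⟩⟩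
        · refine Continuous.subtype_mk ?_ _
          have h1 : Continuous fun p : ↥unitInterval × ↥U => (p.1 : ℝ) :=
            continuous_subtype_val.comp continuous_fst
          have h2 : Continuous fun p : ↥unitInterval × ↥U =>
              (p.2 : EuclideanSpace ℝ (Fin 3)) :=
            continuous_subtype_val.comp continuous_snd
          exact ((continuous_const.sub h1).smul h2).add
            (h1.smul (hR'cont.comp continuous_snd))
        · intro x
          apply Subtype.ext
          simp
        · intro x
          apply Subtype.ext
          simp only [Set.Icc.coe_one, sub_self, zero_smul, one_smul, zero_add]
          rfl
      -- use the inductive hypothesis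
      obtain ⟨y0, hIH⟩ := IH hk1
      have step1 := ContinuousMap.Homotopic.comp hIH (ContinuousMap.Homotopic.refl Rres)
      have step2 := ContinuousMap.Homotopic.comp (ContinuousMap.Homotopic.refl incl) step1
      have e1 : incl.comp ((ContinuousMap.id ↥Pm).comp Rres) = Rb := by
        ext x
        rfl
      have e2 : incl.comp ((ContinuousMap.const ↥Pm y0).comp Rres)
          = ContinuousMap.const ↥U (incl y0) := by
        ext x
        rfl
      rw [e1, e2] at step2
      exact ⟨incl y0, hstep.trans step2⟩
  obtain ⟨m, rfl⟩ : ∃ m, n = m + 1 := ⟨n - 1, (Nat.succ_pred_eq_of_pos hn).symm⟩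
  exact (contractible_iff_id_nullhomotopic _).2 (key m le_rfl)
end

section
/- If a finite collection of closed balls B_r(v₁), …, B_r(vₙ) in ℝ³ satisfies that B_r(vᵢ) ∩ B_r(vⱼ) ⊆ B_r(v_k) for all i < k < j, then the volume of the union equals n·(4π/3)r³ minus the sum over consecutive pairs of the lens volumes: V(⋃ᵢ B_r(vᵢ)) = n·(4π/3)r³ − Σ_{i=1}^{n−1} V(B_r(vᵢ) ∩ B_r(v_{i+1})). -/
open Real MeasureTheory Metric

lemma ball_vol (x : EuclideanSpace ℝ (Fin 3)) (r : ℝ) (hr : 0 ≤ r) :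
    (volume (closedBall x r)).toReal = (4 * π / 3) * r ^ 3 := by
  rw [EuclideanSpace.volume_closedBall]
  have hg : Real.Gamma ((3:ℝ) / 2 + 1) = 3 / 4 * Real.sqrt π := by
    rw [Real.Gamma_add_one (by norm_num),
      show (3:ℝ)/2 = 1/2 + 1 by norm_num, Real.Gamma_add_one (by norm_num),
      Real.Gamma_one_half_eq]
    ring
  simp only [Fintype.card_fin, ENNReal.toReal_mul, ENNReal.toReal_pow,
    ENNReal.toReal_ofReal hr]
  rw [ENNReal.toReal_ofReal (by positivity), show ((3:ℕ):ℝ) = 3 by norm_num, hg,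
    show Real.sqrt π ^ 3 = π * Real.sqrt π by rw [pow_succ, Real.sq_sqrt Real.pi_pos.le]]
  have h0 : Real.sqrt π ≠ 0 := by positivity
  field_simp

theorem volume_union_inclusion_exclusion (n : ℕ) (v : ℕ → EuclideanSpace ℝ (Fin 3)) (r : ℝ)
    (hr : 0 < r)
    (htube : ∀ i k j, i < k → k < j → j < n →
      closedBall (v i) r ∩ closedBall (v j) r ⊆ closedBall (v k) r) :
    (volume (⋃ i ∈ Finset.range n, closedBall (v i) r)).toReal =
      (n : ℝ) * ((4 * π / 3) * r ^ 3) -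
        ∑ i ∈ Finset.range (n - 1),
          (volume (closedBall (v i) r ∩ closedBall (v (i + 1)) r)).toReal := by
  induction n with
  | zero => simp
  | succ m ih =>
    have htube' : ∀ i k j, i < k → k < j → j < m →
        closedBall (v i) r ∩ closedBall (v j) r ⊆ closedBall (v k) r :=
      fun i k j hi hk hj => htube i k j hi hk (hj.trans (Nat.lt_succ_self m))
    match m, ih, htube with
    | 0, _, _ =>
      simp [ball_vol _ _ hr.le, ENNReal.toReal_ofReal hr.le,
        ENNReal.toReal_ofReal (by positivity : (0:ℝ) ≤ π * 4 / 3)]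
      ring
    | m+1, ih, htube =>
      have ih := ih htube'
      have hUm : (⋃ i ∈ Finset.range (m+1+1), closedBall (v i) r) =
          (⋃ i ∈ Finset.range (m+1), closedBall (v i) r) ∪ closedBall (v (m+1)) r := by
        rw [Finset.range_add_one]
        simp [Set.biUnion_insert, Set.union_comm]
      have hinter : (⋃ i ∈ Finset.range (m+1), closedBall (v i) r) ∩ closedBall (v (m+1)) r
          = closedBall (v m) r ∩ closedBall (v (m+1)) r := by
        apply Set.Subset.antisymm
        · rintro x ⟨hx1, hx2⟩
          simp only [Set.mem_iUnion, Finset.mem_range] at hx1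
          obtain ⟨i, hi, hxi⟩ := hx1
          rcases eq_or_lt_of_le (Nat.lt_succ_iff.mp hi) with h | h
          · exact ⟨h ▸ hxi, hx2⟩
          · exact ⟨htube i m (m+1) h (Nat.lt_succ_self m) (Nat.lt_succ_self (m+1))
              ⟨hxi, hx2⟩, hx2⟩
        · intro x hx
          exact ⟨Set.mem_biUnion (Finset.self_mem_range_succ m) hx.1, hx.2⟩
      have hfin : volume (⋃ i ∈ Finset.range (m+1), closedBall (v i) r) ≠ ⊤ :=
        ((measure_biUnion_finset_le _ _).trans_lt
          (ENNReal.sum_lt_top.mpr fun i _ => measure_closedBall_lt_top)).ne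
      have hball : volume (closedBall (v (m+1)) r) ≠ ⊤ := measure_closedBall_lt_top.ne
      have key := measure_union_add_inter (μ := volume)
        (⋃ i ∈ Finset.range (m+1), closedBall (v i) r) measurableSet_closedBall
        (t := closedBall (v (m+1)) r)
      rw [hinter] at key
      have hfin2 : volume ((⋃ i ∈ Finset.range (m+1+1), closedBall (v i) r)) ≠ ⊤ :=
        ((measure_biUnion_finset_le _ _).trans_lt
          (ENNReal.sum_lt_top.mpr fun i _ => measure_closedBall_lt_top)).ne
      have hfin3 : volume (closedBall (v m) r ∩ closedBall (v (m+1)) r) ≠ ⊤ :=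
        ((measure_mono Set.inter_subset_right).trans_lt measure_closedBall_lt_top).ne
      rw [← hUm] at key
      have keyR : (volume (⋃ i ∈ Finset.range (m+1+1), closedBall (v i) r)).toReal +
          (volume (closedBall (v m) r ∩ closedBall (v (m+1)) r)).toReal =
          (volume (⋃ i ∈ Finset.range (m+1), closedBall (v i) r)).toReal +
          (volume (closedBall (v (m+1)) r)).toReal := by
        rw [← ENNReal.toReal_add hfin2 hfin3, ← ENNReal.toReal_add hfin hball, key]
      have hs : (m+1+1-1) = m + 1 := rfl
      rw [hs, Finset.sum_range_succ]
      have hs2 : (m+1-1) = m := rfl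
      rw [hs2] at ih
      rw [ball_vol _ _ hr.le] at keyR
      push_cast at ih ⊢
      linarith [keyR, ih]
end

section
/- For η ∈ (0, 1) and r_s > 0, the planar surface tension coefficient σ(η, r_s) = −(3/(4π r_s²)) · η · ((1 + 2η + 8η² − 5η³)/(3(1 − η)³) + ln(1 − η)/(3η)) is strictly negative. -/
open Real

theorem hard_sphere_surface_tension_neg (rs η : ℝ) (hrs : 0 < rs) (hη : η ∈ Set.Ioo (0 : ℝ) 1) :
    -(3 / (4 * π * rs ^ 2)) * η *
        ((1 + 2 * η + 8 * η ^ 2 - 5 * η ^ 3) / (3 * (1 - η) ^ 3) +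
          Real.log (1 - η) / (3 * η)) < 0 := by
  obtain ⟨h0, h1⟩ := hη
  have h1η : (0:ℝ) < 1 - η := by linarith
  -- log bound: log (1-η) > -η/(1-η)
  have hlog : Real.log (1 - η) > -(η / (1 - η)) := by
    have h := Real.log_lt_sub_one_of_pos (x := (1 - η)⁻¹) (by positivity)
      (by
        intro h
        have : (1:ℝ) - η = 1 := by
          field_simp at h
          linarith
        linarith)
    rw [Real.log_inv] at h
    have : (1 - η)⁻¹ - 1 = η / (1 - η) := by field_simp; ring
    linarith [this ▸ h]
  -- bracket positive
  have hbr : 0 < (1 + 2 * η + 8 * η ^ 2 - 5 * η ^ 3) / (3 * (1 - η) ^ 3) +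
      Real.log (1 - η) / (3 * η) := by
    have hlb : Real.log (1 - η) / (3 * η) > -(1 / (3 * (1 - η))) := by
      rw [gt_iff_lt, neg_lt, ← neg_div, div_lt_div_iff₀ (by positivity) (by positivity)]
      have hq : η / (1 - η) * (1 - η) = η := div_mul_cancel₀ _ (ne_of_gt h1η)
      nlinarith [hlog, hq, h1η]
    have hpoly : (1 + 2 * η + 8 * η ^ 2 - 5 * η ^ 3) / (3 * (1 - η) ^ 3)
        - 1 / (3 * (1 - η)) ≥ 0 := by
      rw [ge_iff_le, sub_nonneg, div_le_div_iff₀ (by positivity) (by positivity)]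
      nlinarith [sq_nonneg η, sq_nonneg (1 - η)]
    linarith
  have hc : 0 < 3 / (4 * π * rs ^ 2) := by positivity
  have := mul_pos (mul_pos hc h0) hbr
  nlinarith [this]
end
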